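/- arXiv:2605.21385 — 4 statements merged into one kernel-verified Lean document; each statement's English description precedes it below -/
import Mathlib

section
/- Let Inv : S → Prop be a global invariant, G : P → ι → S → Prop a family of per-phase local conditions, and φ : S → Prop a safety property. Assume: (initialization) every s ∈ Init satisfies Inv s and, for every instance c with ¬ exec s c, G (phase s) c s; (phase-change preservation and establishment) whenever Inv s and phaseStep s s' hold, then Inv s' holds and, for every instance c with ¬ exec s' c, G (phase s') c s' holds; (stability) whenever Inv s, G (phase s) c s, d ≠ c, and instStep d s s' hold, then G (phase s') c s' holds; (single-instance preservation) whenever Inv s, G (phase s) c s, and instStep c s s' hold, then Inv s' holds; (safety entailment) every s with Inv s and phase s = lf satisfies φ s. Then every reachable state s with phase s = lf satisfies φ s. -/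
/-- Compositional soundness of a generic scheduled transition
system: under initialization, phase-change preservation/establishment,
stability, single-instance preservation and safety entailment, every
reachable state in the final phase satisfies the safety property. -/
theorem stmt0 {S ι P : Type*} (lf : P) (phase : S → P) (exec : S → ι → Prop)
    (instStep : ι → S → S → Prop) (phaseStep : S → S → Prop) (Init : Set S)
    -- frame conditions on instance steps
    (frame_phase : ∀ c s s', instStep c s s' → phase s' = phase s)
    (frame_pre : ∀ c s s', instStep c s s' → ¬ exec s c)
    (frame_post : ∀ c s s', instStep c s s' → exec s' c)
    (frame_other : ∀ c d s s', instStep c s s' → d ≠ c → (exec s' d ↔ exec s d))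
    (Inv : S → Prop) (G : P → ι → S → Prop) (φ : S → Prop)
    -- initialization
    (hinit : ∀ s ∈ Init, Inv s ∧ ∀ c, ¬ exec s c → G (phase s) c s)
    -- phase-change preservation and establishment
    (hphase : ∀ s s', Inv s → phaseStep s s' →
      Inv s' ∧ ∀ c, ¬ exec s' c → G (phase s') c s')
    -- stability
    (hstab : ∀ c d s s', Inv s → G (phase s) c s → d ≠ c → instStep d s s' →
      G (phase s') c s')
    -- single-instance preservation
    (hpres : ∀ c s s', Inv s → G (phase s) c s → instStep c s s' → Inv s')
    -- safety entailment
    (hsafe : ∀ s, Inv s → phase s = lf → φ s) :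
    ∀ s : S,
      (∃ s₀ ∈ Init,
        Relation.ReflTransGen
          (fun a b => (∃ c, instStep c a b) ∨ phaseStep a b) s₀ s) →
      phase s = lf → φ s := by
  rintro s ⟨s₀, hs₀, hrt⟩ hlf
  refine hsafe s ?_ hlf
  suffices h : Inv s ∧ ∀ c, ¬ exec s c → G (phase s) c s from h.1
  clear hlf
  induction hrt with
  | refl => exact hinit s₀ hs₀
  | @tail a b hab hstep ih =>
    rcases hstep with ⟨c, hc⟩ | hp
    · have hne : ¬ exec a c := frame_pre c a b hc
      have hG : G (phase a) c a := ih.2 c hne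
      have hInv' : Inv b := hpres c a b ih.1 hG hc
      refine ⟨hInv', fun d hd => ?_⟩
      have hdc : d ≠ c := fun h => hd (h ▸ frame_post c a b hc)
      have : ¬ exec a d := fun h => hd ((frame_other c d a b hc hdc).mpr h)
      exact hstab d c a b ih.1 (ih.2 d this) hdc.symm hc
    · exact hphase a b ih.1 hp
end

section
/- Let Inv : S → Prop be a global invariant and G : P → ι → S → Prop a family of per-phase local conditions. Assume: (initialization) every s ∈ Init satisfies Inv s and, for every instance c with ¬ exec s c, G (phase s) c s; (phase-change preservation and establishment) whenever Inv s and phaseStep s s' hold, then Inv s' holds and, for every instance c with ¬ exec s' c, G (phase s') c s' holds; (stability) whenever Inv s, G (phase s) c s, d ≠ c, and instStep d s s' hold, then G (phase s') c s' holds; (single-instance preservation) whenever Inv s, G (phase s) c s, and instStep c s s' hold, then Inv s' holds. Then Inv s holds for every reachable state s, and moreover every reachable state s satisfies G (phase s) c s for every instance c with ¬ exec s c. -/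
/-- In a generic scheduled transition system, the global
invariant holds in every reachable state, and every not-yet-executed
instance satisfies its per-phase local condition in every reachable state. -/
theorem stmt1 {S ι P : Type*} (lf : P) (phase : S → P) (exec : S → ι → Prop)
    (instStep : ι → S → S → Prop) (phaseStep : S → S → Prop) (Init : Set S)
    -- frame conditions on instance steps
    (frame_phase : ∀ c s s', instStep c s s' → phase s' = phase s)
    (frame_pre : ∀ c s s', instStep c s s' → ¬ exec s c)
    (frame_post : ∀ c s s', instStep c s s' → exec s' c)
    (frame_other : ∀ c d s s', instStep c s s' → d ≠ c → (exec s' d ↔ exec s d))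
    (Inv : S → Prop) (G : P → ι → S → Prop)
    -- initialization
    (hinit : ∀ s ∈ Init, Inv s ∧ ∀ c, ¬ exec s c → G (phase s) c s)
    -- phase-change preservation and establishment
    (hphase : ∀ s s', Inv s → phaseStep s s' →
      Inv s' ∧ ∀ c, ¬ exec s' c → G (phase s') c s')
    -- stability
    (hstab : ∀ c d s s', Inv s → G (phase s) c s → d ≠ c → instStep d s s' →
      G (phase s') c s')
    -- single-instance preservation
    (hpres : ∀ c s s', Inv s → G (phase s) c s → instStep c s s' → Inv s') :
    ∀ s : S,
      (∃ s₀ ∈ Init,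
        Relation.ReflTransGen
          (fun a b => (∃ c, instStep c a b) ∨ phaseStep a b) s₀ s) →
      Inv s ∧ ∀ c, ¬ exec s c → G (phase s) c s := by
  rintro s ⟨s₀, hs₀, hr⟩
  induction hr with
  | refl => exact hinit s₀ hs₀
  | tail _ hstep ih =>
    rename_i b c' _
    obtain ⟨hInv, hG⟩ := ih
    rcases hstep with ⟨d, hd⟩ | hp
    · constructor
      · exact hpres d b c' hInv (hG d (frame_pre d b c' hd)) hd
      · intro e he
        have hne : e ≠ d := fun h => he (h ▸ frame_post d b c' hd)
        exact hstab e d b c' hInv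
          (hG e fun h => he ((frame_other d e b c' hd hne).mpr h)) hne.symm hd
    · exact hphase b c' hInv hp
end

section
/- Assume (stability) for all instances c, d with d ≠ c and states s, s': if Inv s, G c s, and step d s s' hold, then G c s' holds; and (preservation) for every instance c and states s, s': if Inv s, G c s, and step c s s' hold, then Inv s' holds. Then for every duplicate-free list L of instances and every interleaving execution s₀, s₁, …, sₙ along L, if Inv s₀ holds and G c s₀ holds for every instance c, then Inv sₙ holds, and moreover G c sₙ holds for every instance c that does not occur in L. -/
/-- `Interleave step L s s'` holds iff `s'` is reached from `s` by executing
the single-instance steps of the instances in `L` in order (an interleaving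
execution along `L`). -/
def Interleave {S ι : Type*} (step : ι → S → S → Prop) : List ι → S → S → Prop
  | [], s, s' => s' = s
  | c :: L, s, s' => ∃ t, step c s t ∧ Interleave step L t s'

theorem stmt2_aux {S ι : Type*} (step : ι → S → S → Prop)
    (Inv : S → Prop) (G : ι → S → Prop)
    (hstab : ∀ c d s s', d ≠ c → Inv s → G c s → step d s s' → G c s')
    (hpres : ∀ c s s', Inv s → G c s → step c s s' → Inv s') :
    ∀ L : List ι, L.Nodup → ∀ s₀ sₙ : S, Interleave step L s₀ sₙ →
      Inv s₀ → (∀ c, c ∈ L → G c s₀) → ∀ P : ι → Prop, (∀ c, P c → c ∉ L) →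
      (∀ c, P c → G c s₀) →
      Inv sₙ ∧ ∀ c, P c → G c sₙ := by
  intro L
  induction L with
  | nil =>
    intro _ s₀ sₙ h hInv _ P _ hP
    cases h; exact ⟨hInv, hP⟩
  | cons c₁ L' ih =>
    intro hnd s₀ sₙ h hInv hG P hPnot hPG
    obtain ⟨t, hst, hrest⟩ := h
    have hG₁ : G c₁ s₀ := hG c₁ (by simp)
    have hInvt : Inv t := hpres c₁ s₀ t hInv hG₁ hst
    have hnd' := hnd
    rw [List.nodup_cons] at hnd'
    refine ih hnd'.2 t sₙ hrest hInvt ?_ P ?_ ?_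
    · intro c hc
      exact hstab c c₁ s₀ t (fun e => hnd'.1 (e ▸ hc)) hInv (hG c (by simp [hc])) hst
    · intro c hc hm
      exact hPnot c hc (by simp [hm])
    · intro c hc
      have hne : c₁ ≠ c := fun e => hPnot c hc (by simp [e])
      exact hstab c c₁ s₀ t hne hInv (hPG c hc) hst

/-- Under stability and single-instance preservation, any
interleaving execution along a duplicate-free list of instances, starting
from a state satisfying the invariant and all local conditions, preserves the
invariant, and the local condition of every instance not occurring in the
list still holds at the end. -/
theorem stmt2 {S ι : Type*} (step : ι → S → S → Prop)
    (Inv : S → Prop) (G : ι → S → Prop)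
    -- stability
    (hstab : ∀ c d s s', d ≠ c → Inv s → G c s → step d s s' → G c s')
    -- preservation
    (hpres : ∀ c s s', Inv s → G c s → step c s s' → Inv s') :
    ∀ L : List ι, L.Nodup → ∀ s₀ sₙ : S, Interleave step L s₀ sₙ →
      Inv s₀ → (∀ c, G c s₀) →
      Inv sₙ ∧ ∀ c, c ∉ L → G c sₙ := by
  intro L hnd s₀ sₙ h hInv hG
  exact stmt2_aux step Inv G hstab hpres L hnd s₀ sₙ h hInv (fun c _ => hG c)
    (fun c => c ∉ L) (fun c hc => hc) (fun c _ => hG c)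
end

section
/- Assume ι is a finite type, and assume (stability) for all instances c, d with d ≠ c and states s, s': if Inv s, G c s, and step d s s' hold, then G c s' holds; and (preservation) for every instance c and states s, s': if Inv s, G c s, and step c s s' hold, then Inv s' holds. Then for every list L that enumerates each instance of ι exactly once (L has no duplicates and every instance occurs in L) and every interleaving execution s₀, s₁, …, sₙ along L with Inv s₀ and G c s₀ for every instance c, the invariant Inv sₙ holds. In particular, preservation of the invariant under a full self-loop execution of all instances holds for every choice of execution order. -/

theorem stmt3_aux {S ι : Type*} (step : ι → S → S → Prop)
    (Inv : S → Prop) (G : ι → S → Prop)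
    (hstab : ∀ c d s s', d ≠ c → Inv s → G c s → step d s s' → G c s')
    (hpres : ∀ c s s', Inv s → G c s → step c s s' → Inv s') :
    ∀ L : List ι, L.Nodup →
      ∀ s₀ sₙ : S, Interleave step L s₀ sₙ →
      Inv s₀ → (∀ c ∈ L, G c s₀) → Inv sₙ := by
  intro L
  induction L with
  | nil => intro _ s₀ sₙ h hI _; cases h; exact hI
  | cons c L ih =>
    intro hnd s₀ sₙ h hI hG
    obtain ⟨t, hstep, hrest⟩ := h
    have hIt : Inv t := hpres c s₀ t hI (hG c (by simp)) hstep
    refine ih hnd.of_cons t sₙ hrest hIt ?_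
    intro d hd
    have hdc : c ≠ d := fun e => (List.nodup_cons.mp hnd).1 (e ▸ hd)
    exact hstab d c s₀ t hdc hI (hG d (by simp [hd])) hstep

/-- For a finite type of instances, under stability and
single-instance preservation, the invariant is preserved by a full self-loop
execution of all instances (an interleaving execution along any list
enumerating each instance exactly once), for every choice of execution
order. -/
theorem stmt3 {S ι : Type*} [Fintype ι] (step : ι → S → S → Prop)
    (Inv : S → Prop) (G : ι → S → Prop)
    -- stability
    (hstab : ∀ c d s s', d ≠ c → Inv s → G c s → step d s s' → G c s')
    -- preservation
    (hpres : ∀ c s s', Inv s → G c s → step c s s' → Inv s') :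
    ∀ L : List ι, L.Nodup → (∀ c : ι, c ∈ L) →
      ∀ s₀ sₙ : S, Interleave step L s₀ sₙ →
      Inv s₀ → (∀ c, G c s₀) → Inv sₙ := by
  intro L hnd hmem s₀ sₙ h hI hG
  exact stmt3_aux step Inv G hstab hpres L hnd s₀ sₙ h hI (fun c _ => hG c)
end
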